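/- arXiv:0904.0518 — 7 statements merged into one kernel-verified Lean document; each statement's English description precedes it below -/
import Mathlib

section
/- Let A be a unital C*-algebra and let a ∈ A. Then the 2×2 matrix [[|a*|, a], [a*, |a|]] is a positive element of the C*-algebra M₂(A) of 2×2 matrices over A. -/
/-!
With `N = [[0, a], [a*, 0]]`, which is self-adjoint, `N* N = diag(a a*, a* a)` is the square of
the positive element `diag(|a*|, |a|)`, so the matrix in question is `|N| + N`. For a
self-adjoint `x` one has `|x| + x = 2 x⁺ ≥ 0`.
-/

open CFC Matrix

lemma CFC.abs_add_self_nonneg {B : Type*} [CStarAlgebra B] [PartialOrder B] [StarOrderedRing B]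
    (x : B) (hx : IsSelfAdjoint x) : 0 ≤ abs x + x := by
  rw [abs_add_self x hx]
  exact nsmul_nonneg (posPart_nonneg x) 2

lemma map_diagonal_nonneg {n A B F : Type*} [Fintype n] [DecidableEq n]
    [CStarAlgebra A] [PartialOrder A] [StarOrderedRing A]
    [Semiring B] [PartialOrder B] [StarRing B] [StarOrderedRing B]
    [FunLike F (Matrix n n A) B] [MulHomClass F (Matrix n n A) B] [StarHomClass F (Matrix n n A) B]
    (Φ : F) {d : n → A} (hd : ∀ i, 0 ≤ d i) : 0 ≤ Φ (diagonal d) := by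
  have hsq : diagonal d = star (diagonal (sqrt ∘ d)) * diagonal (sqrt ∘ d) := by
    rw [star_eq_conjTranspose, diagonal_conjTranspose, diagonal_mul_diagonal]
    congr 1
    funext i
    simp [(sqrt_nonneg (d i)).star_eq, sqrt_mul_sqrt_self (d i) (hd i)]
  rw [hsq, map_mul, map_star]
  exact star_mul_self_nonneg _

lemma abs_map_antidiagonal {A B F : Type*} [CStarAlgebra A] [PartialOrder A] [StarOrderedRing A]
    [CStarAlgebra B] [PartialOrder B] [StarOrderedRing B] [FunLike F (Matrix (Fin 2) (Fin 2) A) B]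
    [MulHomClass F (Matrix (Fin 2) (Fin 2) A) B] [StarHomClass F (Matrix (Fin 2) (Fin 2) A) B]
    (Φ : F) (a : A) :
    abs (Φ !![0, a; star a, 0]) = Φ (diagonal ![sqrt (a * star a), sqrt (star a * a)]) := by
  refine sqrt_unique ?_ (map_diagonal_nonneg Φ ?_)
  · rw [← map_star, ← map_mul, ← map_mul, diagonal_mul_diagonal]
    congr 1
    ext i j
    fin_cases i <;> fin_cases j <;>
      simp [mul_apply, sqrt_mul_sqrt_self _ (mul_star_self_nonneg a),
        sqrt_mul_sqrt_self _ (star_mul_self_nonneg a)]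
  · intro i
    fin_cases i <;> exact sqrt_nonneg _

/-- Let `A` be a unital C*-algebra and `a ∈ A`. Then the 2×2 matrix
`[[|a*|, a], [a*, |a|]]` is a positive element of the C*-algebra `M₂(A)`.

Here `|a| = √(a* a)` and `|a*| = √(a a*)` (continuous functional calculus square roots).
Since Mathlib does not endow `Matrix (Fin 2) (Fin 2) A` with its (unique) C*-algebra
structure, we express the positive cone of the C*-algebra `M₂(A)` via an arbitrary
C*-algebra `B` that is ⋆-isomorphic to `M₂(A)`. -/
theorem stmt0 {A B : Type*} [CStarAlgebra A] [PartialOrder A] [StarOrderedRing A]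
    [CStarAlgebra B] [PartialOrder B] [StarOrderedRing B]
    (Φ : Matrix (Fin 2) (Fin 2) A ≃⋆ₐ[ℂ] B) (a : A) :
    0 ≤ Φ !![CFC.sqrt (a * star a), a; star a, CFC.sqrt (star a * a)] := by
  set N : Matrix (Fin 2) (Fin 2) A := !![0, a; star a, 0]
  have hN : IsSelfAdjoint N := by
    ext i j
    fin_cases i <;> fin_cases j <;> simp [N]
  have hsplit : !![CFC.sqrt (a * star a), a; star a, CFC.sqrt (star a * a)] =
      diagonal ![sqrt (a * star a), sqrt (star a * a)] + N := by
    ext i j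
    fin_cases i <;> fin_cases j <;> simp [N]
  rw [hsplit, map_add, ← abs_map_antidiagonal]
  exact abs_add_self_nonneg _ (hN.map Φ)
end

section
/- Let n ∈ ℕ and let a be an n×n complex matrix. Then the 2n×2n block matrix fromBlocks(√(a aᴴ), a, aᴴ, √(aᴴ a)) — i.e. the block matrix with (1,1)-block √(a aᴴ), (1,2)-block a, (2,1)-block aᴴ and (2,2)-block √(aᴴ a) — is positive semidefinite. -/
/-!
For the self-adjoint matrix `T = fromBlocks 0 a aᴴ 0` one has `T * T = fromBlocks (a aᴴ) 0 0 (aᴴ a)`,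
so `|T| = √(T * T)` is block diagonal with blocks `√(a aᴴ)` and `√(aᴴ a)`. The matrix in question
is therefore `|T| + T = 2 T⁺`, which is nonnegative.
-/

open scoped ComplexOrder in
/-- The positive semidefinite square root of a positive semidefinite matrix
(the definition of `Matrix.PosSemidef.sqrt` in Mathlib of December 2024, since removed). -/
noncomputable def Matrix.PosSemidef.sqrt {n : Type*} [Fintype n] [DecidableEq n] {𝕜 : Type*}
    [RCLike 𝕜] {A : Matrix n n 𝕜} (hA : A.PosSemidef) : Matrix n n 𝕜 :=
  hA.1.eigenvectorUnitary.1 * Matrix.diagonal ((↑) ∘ (√·) ∘ hA.1.eigenvalues) *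
  (star hA.1.eigenvectorUnitary : Matrix n n 𝕜)

open scoped MatrixOrder ComplexOrder

namespace Matrix

variable {m l 𝕜 : Type*} [Fintype m] [DecidableEq m] [Fintype l] [DecidableEq l] [RCLike 𝕜]

lemma PosSemidef.sqrt_eq_cfcSqrt {A : Matrix m m 𝕜} (hA : A.PosSemidef) :
    hA.sqrt = CFC.sqrt A := by
  rw [CFC.sqrt_eq_cfc, cfc_nnreal_eq_real _ A hA.nonneg, hA.1.cfc_eq]
  simp only [IsHermitian.cfc, PosSemidef.sqrt]
  congr 3
  funext i
  simp [hA.eigenvalues_nonneg i]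

lemma PosSemidef.fromBlocks_zero₁₂_zero₂₁ {A : Matrix m m 𝕜} {D : Matrix l l 𝕜}
    (hA : A.PosSemidef) (hD : D.PosSemidef) : (fromBlocks A 0 0 D).PosSemidef := by
  have hA' := hA.mul_mul_conjTranspose_same (fromRows (1 : Matrix m m 𝕜) (0 : Matrix l m 𝕜))
  have hD' := hD.mul_mul_conjTranspose_same (fromRows (0 : Matrix m l 𝕜) (1 : Matrix l l 𝕜))
  convert hA'.add hD' using 1
  ext (i | i) (j | j) <;>
    simp [fromRows_mul, mul_fromCols, conjTranspose_fromRows_eq_fromCols_conjTranspose]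

lemma cfcSqrt_fromBlocks_zero₁₂_zero₂₁ {A : Matrix m m 𝕜} {D : Matrix l l 𝕜}
    (hA : 0 ≤ A) (hD : 0 ≤ D) :
    CFC.sqrt (fromBlocks A 0 0 D) = fromBlocks (CFC.sqrt A) 0 0 (CFC.sqrt D) := by
  refine CFC.sqrt_unique ?_ ?_
  · simp [fromBlocks_multiply, CFC.sqrt_mul_sqrt_self, hA, hD]
  · exact (PosSemidef.fromBlocks_zero₁₂_zero₂₁ (nonneg_iff_posSemidef.mp (CFC.sqrt_nonneg A))
      (nonneg_iff_posSemidef.mp (CFC.sqrt_nonneg D))).nonneg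

lemma cfcAbs_fromBlocks_zero_self_conjTranspose_zero (a : Matrix m l 𝕜) :
    CFC.abs (fromBlocks 0 a aᴴ 0) = fromBlocks (CFC.sqrt (a * aᴴ)) 0 0 (CFC.sqrt (aᴴ * a)) := by
  rw [CFC.abs, ← cfcSqrt_fromBlocks_zero₁₂_zero₂₁ (posSemidef_self_mul_conjTranspose a).nonneg
    (posSemidef_conjTranspose_mul_self a).nonneg]
  simp [star_eq_conjTranspose, fromBlocks_conjTranspose, fromBlocks_multiply]

theorem posSemidef_fromBlocks_cfcSqrt_self_conjTranspose_cfcSqrt (a : Matrix m l 𝕜) :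
    (fromBlocks (CFC.sqrt (a * aᴴ)) a aᴴ (CFC.sqrt (aᴴ * a))).PosSemidef := by
  set T := fromBlocks 0 a aᴴ 0
  have hT : IsSelfAdjoint T := by
    simp [T, IsSelfAdjoint, star_eq_conjTranspose, fromBlocks_conjTranspose]
  have hpos : fromBlocks (CFC.sqrt (a * aᴴ)) a aᴴ (CFC.sqrt (aᴴ * a)) = 2 • T⁺ := by
    rw [← CFC.abs_add_self T, cfcAbs_fromBlocks_zero_self_conjTranspose_zero, fromBlocks_add]
    simp
  rw [← nonneg_iff_posSemidef, hpos]
  exact smul_nonneg zero_le_two (CFC.posPart_nonneg T)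

end Matrix

open Matrix ComplexOrder in
/-- For an `n × n` complex matrix `a`, the `2n × 2n` block matrix
`fromBlocks (√(a aᴴ)) a aᴴ (√(aᴴ a))` is positive semidefinite. -/
theorem stmt1 (n : ℕ) (a : Matrix (Fin n) (Fin n) ℂ) :
    (Matrix.fromBlocks (Matrix.posSemidef_self_mul_conjTranspose a).sqrt a
      aᴴ (Matrix.posSemidef_conjTranspose_mul_self a).sqrt).PosSemidef := by
  simpa only [PosSemidef.sqrt_eq_cfcSqrt] using
    posSemidef_fromBlocks_cfcSqrt_self_conjTranspose_cfcSqrt a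
end

section
/- Let A be a unital C*-algebra, let a ∈ A, and let n ≥ 1 be a natural number. Then a* · |a*|^{n-1} · a = |a|^{n+1}. -/
/-!
Write `s = |a*|^(n-1)`. Since `s` commutes with `a a*` and `s² = (a a*)^(n-1)`,
`(a* s a)² = a* (a a*)^n a = (a* a)^(n+1)`. As `a* s a ≥ 0`, uniqueness of positive square roots
gives `a* s a = √((a* a)^(n+1)) = |a|^(n+1)`.
-/

namespace CFC

variable {A : Type*} [CStarAlgebra A] [PartialOrder A] [StarOrderedRing A]

lemma commute_sqrt_self {b : A} (hb : 0 ≤ b) : Commute (sqrt b) b := by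
  simpa only [sqrt_mul_sqrt_self b hb] using (Commute.refl (sqrt b)).mul_right (.refl _)

lemma sqrt_pow_mul_sqrt_pow {b : A} (hb : 0 ≤ b) (k : ℕ) :
    sqrt b ^ k * sqrt b ^ k = b ^ k := by
  rw [← (Commute.refl _).mul_pow, sqrt_mul_sqrt_self b hb]

lemma sqrt_pow {b : A} (hb : 0 ≤ b) (k : ℕ) : sqrt (b ^ k) = sqrt b ^ k :=
  sqrt_unique (sqrt_pow_mul_sqrt_pow hb k) (CStarAlgebra.pow_nonneg (sqrt_nonneg b) k)

lemma star_mul_sqrt_pow_mul_mul_self (a : A) (k : ℕ) :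
    (star a * sqrt (a * star a) ^ k * a) * (star a * sqrt (a * star a) ^ k * a) =
      (star a * a) ^ (k + 2) := by
  have hc : 0 ≤ a * star a := mul_star_self_nonneg a
  have hs : sqrt (a * star a) ^ k * (a * star a) * sqrt (a * star a) ^ k =
      (a * star a) ^ (k + 1) := by
    rw [((commute_sqrt_self hc).pow_left k).eq, mul_assoc, sqrt_pow_mul_sqrt_pow hc, ← pow_succ']
  calc _ = star a * (sqrt (a * star a) ^ k * (a * star a) * sqrt (a * star a) ^ k) * a := by
        simp only [mul_assoc]
    _ = star a * ((a * star a) ^ (k + 1) * a) := by rw [hs, mul_assoc]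
    _ = (star a * a) ^ (k + 2) := by rw [mul_pow_mul, ← mul_assoc, ← pow_succ']

theorem star_mul_sqrt_pow_mul (a : A) (k : ℕ) :
    star a * sqrt (a * star a) ^ k * a = sqrt (star a * a) ^ (k + 2) := by
  rw [← sqrt_pow (star_mul_self_nonneg a)]
  exact (sqrt_unique (star_mul_sqrt_pow_mul_mul_self a k)
    (star_left_conjugate_nonneg (CStarAlgebra.pow_nonneg (sqrt_nonneg _) k) a)).symm

end CFC

/-- In a unital C*-algebra `A`, for every `a ∈ A` and every natural
number `n ≥ 1`, one has `a* · |a*|^(n-1) · a = |a|^(n+1)`, where `|a| = √(a* a)` and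
`|a*| = √(a a*)` are given by the continuous functional calculus. -/
theorem stmt3 {A : Type*} [CStarAlgebra A] [PartialOrder A] [StarOrderedRing A]
    (a : A) (n : ℕ) (hn : 1 ≤ n) :
    star a * CFC.sqrt (a * star a) ^ (n - 1) * a = CFC.sqrt (star a * a) ^ (n + 1) := by
  obtain ⟨k, rfl⟩ := Nat.exists_eq_add_of_le' hn
  exact CFC.star_mul_sqrt_pow_mul a k
end

section
/- Let A be a unital C*-algebra, let a ∈ A, and let n ≥ 1 be a natural number. Then in M₂(A) one has the identity ([[|a*|, a], [a*, |a|]])^n = 2^{n-1} · [[|a*|^n, |a*|^{n-1} a], [a* |a*|^{n-1}, |a|^n]]. -/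
/-!
Write `p = |a*|` and `q = |a|`, so `p² = a a*` and `q² = a* a`. Since `a` intertwines `a* a` with
`a a*`, it intertwines every continuous function of them, in particular `a q = p a` (and, taking
adjoints, `a* p = q a*`). These four relations say exactly that `M² = 2 diag(p, q) M` for the matrix
`M` of the statement, hence `M^(n+1) = 2ⁿ diag(pⁿ, qⁿ) M`.
-/

theorem ContinuousMap.semiconjBy_algHom_of_semiconjBy_id {A : Type*} [Semiring A] [Algebra ℝ A]
    [TopologicalSpace A] [IsTopologicalSemiring A] [T2Space A] {s : Set ℝ} [CompactSpace s]
    {φ ψ : C(s, ℝ) →ₐ[ℝ] A} (hφ : Continuous φ) (hψ : Continuous ψ) {x : A}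
    (h : SemiconjBy x (φ (.restrict s (.id ℝ))) (ψ (.restrict s (.id ℝ)))) (f : C(s, ℝ)) :
    SemiconjBy x (φ f) (ψ f) := by
  induction f using ContinuousMap.induction_on_of_compact with
  | const r =>
    change SemiconjBy x (φ (algebraMap ℝ _ r)) (ψ (algebraMap ℝ _ r))
    rw [AlgHom.commutes, AlgHom.commutes]
    exact (Algebra.commutes r x).symm
  | id => exact h
  | star_id => rwa [star_trivial]
  | add f g hf hg => simpa only [map_add] using hf.add_right hg
  | mul f g hf hg => simpa only [map_mul] using hf.mul_right hg
  | frequently f hf =>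
    have hclosed : IsClosed {g : C(s, ℝ) | SemiconjBy x (φ g) (ψ g)} :=
      isClosed_eq (by fun_prop) (by fun_prop)
    exact hclosed.mem_of_frequently_of_tendsto hf Filter.tendsto_id

theorem SemiconjBy.cfc_real {A : Type*} [Ring A] [StarRing A] [Algebra ℝ A] [TopologicalSpace A]
    [ContinuousFunctionalCalculus ℝ A IsSelfAdjoint] [IsTopologicalRing A] [T2Space A]
    {x b c : A} (h : SemiconjBy x b c) (hb : IsSelfAdjoint b) (hc : IsSelfAdjoint c) (f : ℝ → ℝ)
    (hf : ContinuousOn f (spectrum ℝ b ∪ spectrum ℝ c)) :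
    SemiconjBy x (cfc f b) (cfc f c) := by
  set K := spectrum ℝ b ∪ spectrum ℝ c
  have : CompactSpace K := isCompact_iff_compactSpace.mp
    ((ContinuousFunctionalCalculus.isCompact_spectrum (R := ℝ) b).union
      (ContinuousFunctionalCalculus.isCompact_spectrum (R := ℝ) c))
  let ιb : C(spectrum ℝ b, K) := ⟨Set.inclusion Set.subset_union_left, continuous_inclusion _⟩
  let ιc : C(spectrum ℝ c, K) := ⟨Set.inclusion Set.subset_union_right, continuous_inclusion _⟩
  let φ := (cfcHom hb).toAlgHom.comp (ContinuousMap.compStarAlgHom' ℝ ℝ ιb).toAlgHom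
  let ψ := (cfcHom hc).toAlgHom.comp (ContinuousMap.compStarAlgHom' ℝ ℝ ιc).toAlgHom
  have hid : SemiconjBy x (φ (.restrict K (.id ℝ))) (ψ (.restrict K (.id ℝ))) := by
    change SemiconjBy x (cfcHom hb (.restrict _ (.id ℝ))) (cfcHom hc (.restrict _ (.id ℝ)))
    rwa [cfcHom_id, cfcHom_id]
  rw [cfc_apply f b hb (hf.mono Set.subset_union_left),
    cfc_apply f c hc (hf.mono Set.subset_union_right)]
  exact ContinuousMap.semiconjBy_algHom_of_semiconjBy_id (φ := φ) (ψ := ψ)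
    ((cfcHom_continuous hb).comp (ContinuousMap.continuous_precomp ιb))
    ((cfcHom_continuous hc).comp (ContinuousMap.continuous_precomp ιc)) hid
    ⟨K.domRestrict f, hf.domRestrict⟩

theorem CFC.mul_sqrt_star_mul_self {A : Type*} [CStarAlgebra A] [PartialOrder A]
    [StarOrderedRing A] (a : A) :
    a * CFC.sqrt (star a * a) = CFC.sqrt (a * star a) * a := by
  rw [CFC.sqrt_eq_real_sqrt _ (star_mul_self_nonneg a),
    CFC.sqrt_eq_real_sqrt _ (mul_star_self_nonneg a), cfcₙ_eq_cfc, cfcₙ_eq_cfc]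
  exact SemiconjBy.cfc_real (mul_assoc a (star a) a).symm (.star_mul_self a) (.mul_star_self a)
    _ Real.continuous_sqrt.continuousOn

theorem Matrix.fin_two_pow_succ_eq_two_pow_smul {R : Type*} [Semiring R] {p a b q : R}
    (hp : p * p = a * b) (hq : q * q = b * a) (ha : SemiconjBy a q p) (hb : SemiconjBy b p q)
    (n : ℕ) :
    !![p, a; b, q] ^ (n + 1) = 2 ^ n • !![p ^ (n + 1), p ^ n * a; b * p ^ n, q ^ (n + 1)] := by
  set M := !![p, a; b, q]
  set D : Matrix (Fin 2) (Fin 2) R := diagonal ![p, q]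
  have hsq : M * M = (2 • D) * M := by
    rw [smul_mul_assoc, two_smul]
    ext i j
    fin_cases i <;> fin_cases j <;> simp [M, D, Matrix.mul_apply, hp, hq, ha.eq, hb.eq]
  have hpow : ∀ k : ℕ, M ^ (k + 1) = (2 • D) ^ k * M := by
    intro k
    induction k with
    | zero => simp
    | succ k ih => rw [pow_succ, ih, mul_assoc, hsq, ← mul_assoc, ← pow_succ]
  rw [hpow, smul_pow, smul_mul_assoc, diagonal_pow]
  congr 1
  ext i j
  fin_cases i <;> fin_cases j <;> simp [M, Matrix.mul_apply, pow_succ, (hb.pow_right n).eq]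

/-- Let `A` be a unital C*-algebra, `a ∈ A`, and `n ≥ 1`. Then in
`M₂(A)` one has
`([[|a*|, a], [a*, |a|]])^n = 2^(n-1) • [[|a*|^n, |a*|^(n-1) a], [a* |a*|^(n-1), |a|^n]]`,
where `|a| = √(a* a)` and `|a*| = √(a a*)` are given by the continuous functional
calculus. -/
theorem stmt5 {A : Type*} [CStarAlgebra A] [PartialOrder A] [StarOrderedRing A]
    (a : A) (n : ℕ) (hn : 1 ≤ n) :
    (!![CFC.sqrt (a * star a), a; star a, CFC.sqrt (star a * a)] :
        Matrix (Fin 2) (Fin 2) A) ^ n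
      = 2 ^ (n - 1) •
          !![CFC.sqrt (a * star a) ^ n, CFC.sqrt (a * star a) ^ (n - 1) * a;
             star a * CFC.sqrt (a * star a) ^ (n - 1), CFC.sqrt (star a * a) ^ n] := by
  obtain ⟨m, rfl⟩ := Nat.exists_eq_add_of_le' hn
  have hstar : star a * CFC.sqrt (a * star a) = CFC.sqrt (star a * a) * star a := by
    simpa using CFC.mul_sqrt_star_mul_self (star a)
  rw [Nat.add_sub_cancel]
  exact Matrix.fin_two_pow_succ_eq_two_pow_smul
    (CFC.sqrt_mul_sqrt_self _ (mul_star_self_nonneg a))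
    (CFC.sqrt_mul_sqrt_self _ (star_mul_self_nonneg a)) (CFC.mul_sqrt_star_mul_self a) hstar m
end

section
/- Let A be a unital C*-algebra and let a, v ∈ A satisfy a = v · |a| and v* v · |a| = |a|. Then for every continuous function f : ℝ → ℝ with f(0) = 0, applying f via continuous functional calculus to the positive element (1/2) · [[|a*|, a], [a*, |a|]] of M₂(A) yields f((1/2) · [[|a*|, a], [a*, |a|]]) = (1/2) · [[f(|a*|), f(|a*|) v], [v* f(|a*|), f(|a|)]]. -/
/-!
Write `p = |a|`. The polar decomposition gives `|a*| = v p v*`, and with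
`c = 2^{-1/2} [[v, 0], [1, 0]]` and `D = diag(p, 0)` the matrix in question is `c D c*`, where
`c* c` acts as the identity on `D`.

If `w* w p = p`, then `w* w` also acts as the identity on every `g(p)` with `g(0) = 0`, so
`g ↦ w g(p) w*` is a ⋆-homomorphism on `C(σ(p))₀` sending the identity to `w p w*`; moreover
`σ(w p w*) = σ(p w* w) = σ(p)`. Uniqueness of the functional calculus then gives
`f(w p w*) = w f(p) w*`. Applying this to `w = c` in `M₂(A)` (together with
`f(diag(p, 0)) = diag(f(p), 0)`, as the corner embedding is a ⋆-homomorphism) and to `w = v`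
in `A` yields the formula.
-/

open scoped ContinuousMapZero CStarAlgebra

lemma Complex.ofReal_inv_sqrt_two_mul_self :
    (((√2)⁻¹ : ℝ) : ℂ) * (((√2)⁻¹ : ℝ) : ℂ) = 1 / 2 := by
  rw [← ofReal_mul, ← mul_inv, Real.mul_self_sqrt zero_le_two]
  norm_num

namespace Matrix

section Single

variable (R : Type*) {n α : Type*} [Fintype n] [DecidableEq n] [CommSemiring R]
  [NonUnitalSemiring α] [StarRing α] [Module R α]

def singleNonUnitalStarAlgHom (i : n) : α →⋆ₙₐ[R] Matrix n n α where
  toFun := single i i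
  map_smul' r a := (smul_single r i i a).symm
  map_zero' := single_zero i i
  map_add' := single_add i i
  map_mul' a b := (single_mul_single_same (c := a) i i i b).symm
  map_star' a := (conjTranspose_single i i a).symm

end Single

lemma single_zero_zero_fin_two {α : Type*} [Zero α] (x : α) :
    single (0 : Fin 2) 0 x = !![x, 0; 0, 0] := by
  ext i j; fin_cases i <;> fin_cases j <;> rfl

section PolarColumn

variable {A : Type*} [Ring A] [StarRing A] [Algebra ℂ A] [StarModule ℂ A]

noncomputable def polarColumn (v : A) : Matrix (Fin 2) (Fin 2) A :=
  (((√2)⁻¹ : ℝ) : ℂ) • !![v, 0; 1, 0]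

lemma star_polarColumn (v : A) :
    star (polarColumn v) = (((√2)⁻¹ : ℝ) : ℂ) • !![star v, 1; 0, 0] := by
  ext i j; fin_cases i <;> fin_cases j <;> simp [polarColumn, Complex.conj_ofReal]

lemma polarColumn_mul_single_mul_star (v x : A) :
    polarColumn v * single 0 0 x * star (polarColumn v) =
      (1 / 2 : ℂ) • !![v * x * star v, v * x; x * star v, x] := by
  rw [star_polarColumn, polarColumn, smul_mul_assoc, smul_mul_smul_comm,
    Complex.ofReal_inv_sqrt_two_mul_self, single_zero_zero_fin_two, mul_fin_two, mul_fin_two]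
  simp

lemma star_polarColumn_mul_self_mul_single {v x : A} (hv : star v * v * x = x) :
    star (polarColumn v) * polarColumn v * single 0 0 x = single 0 0 x := by
  rw [star_polarColumn, polarColumn, smul_mul_smul_comm, Complex.ofReal_inv_sqrt_two_mul_self,
    smul_mul_assoc, single_zero_zero_fin_two, mul_fin_two, mul_fin_two]
  ext i j; fin_cases i <;> fin_cases j <;> simp [add_mul, hv]
  module

end PolarColumn

end Matrix

section Conjugate

variable {B : Type*} [CStarAlgebra B] {e p w : B}

lemma mul_cfcₙHom_eq_self (hp : IsSelfAdjoint p) (h : e * p = p)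
    (g : C(quasispectrum ℝ p, ℝ)₀) : e * cfcₙHom hp g = cfcₙHom hp g := by
  have hd : (e - 1) * cfcₙHom hp (.id (quasispectrum ℝ p)) = 0 := by
    rw [cfcₙHom_id, sub_mul, h, one_mul, sub_self]
  have := ContinuousMapZero.mul_nonUnitalStarAlgHom_apply_eq_zero _ _ hd
    (by rwa [star_trivial]) (cfcₙHom_continuous hp) g
  rwa [sub_mul, one_mul, sub_eq_zero] at this

lemma cfcₙHom_mul_eq_self (hp : IsSelfAdjoint p) (he : IsSelfAdjoint e) (h : e * p = p)
    (g : C(quasispectrum ℝ p, ℝ)₀) : cfcₙHom hp g * e = cfcₙHom hp g := by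
  simpa only [star_mul, he.star_eq, (cfcₙHom_predicate hp g).star_eq]
    using congr(star $(mul_cfcₙHom_eq_self hp h g))

lemma mul_cfcₙ_eq_self (h : e * p = p) (f : ℝ → ℝ) : e * cfcₙ f p = cfcₙ f p :=
  cfcₙ_cases (fun x ↦ e * x = x) p f (mul_zero e) fun _ _ hp ↦ mul_cfcₙHom_eq_self hp h _

lemma cfcₙ_mul_eq_self (he : IsSelfAdjoint e) (h : e * p = p) (f : ℝ → ℝ) :
    cfcₙ f p * e = cfcₙ f p :=
  cfcₙ_cases (fun x ↦ x * e = x) p f (zero_mul e) fun _ _ hp ↦ cfcₙHom_mul_eq_self hp he h _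

lemma quasispectrum_conjugate_eq (hp : IsSelfAdjoint p) (hw : star w * w * p = p) :
    quasispectrum ℝ (w * p * star w) = quasispectrum ℝ p := by
  have hpw : p * (star w * w) = p := by
    simpa only [star_mul, star_star, hp.star_eq, mul_assoc] using congr(star $hw)
  rw [mul_assoc, quasispectrum.mul_comm, mul_assoc, hpw]

noncomputable def cfcₙHomConjugate (hp : IsSelfAdjoint p) (hw : star w * w * p = p) :
    C(quasispectrum ℝ p, ℝ)₀ →⋆ₙₐ[ℝ] B where
  toFun g := w * cfcₙHom hp g * star w
  map_smul' r g := by simp only [map_smul, mul_smul_comm, smul_mul_assoc, MonoidHom.id_apply]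
  map_zero' := by simp only [map_zero, mul_zero, zero_mul]
  map_add' g h := by simp only [map_add, mul_add, add_mul]
  map_mul' g h := by
    simp only [map_mul]
    conv_lhs => rw [← cfcₙHom_mul_eq_self hp (.star_mul_self w) hw g]
    noncomm_ring
  map_star' g := by simp only [map_star, star_mul, star_star, mul_assoc]

lemma cfcₙHomConjugate_eq_cfcₙHomSuperset (hp : IsSelfAdjoint p) (hw : star w * w * p = p) :
    cfcₙHomConjugate hp hw =
      cfcₙHomSuperset (hp.conjugate w) (quasispectrum_conjugate_eq hp hw).subset := by
  have : ContinuousMapZero.UniqueHom ℝ B := inferInstance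
  refine ContinuousMapZero.UniqueHom.eq_of_continuous_of_map_id _ _ _ ?_
    (cfcₙHomSuperset_continuous _ _) ?_
  · change Continuous fun g ↦ w * cfcₙHom hp g * star w
    fun_prop
  · rw [cfcₙHomSuperset_id]
    exact congr(w * $(cfcₙHom_id hp) * star w)

lemma cfcₙ_conjugate (hp : IsSelfAdjoint p) (hw : star w * w * p = p) (f : ℝ → ℝ) :
    cfcₙ f (w * p * star w) = w * cfcₙ f p * star w := by
  have hσ := quasispectrum_conjugate_eq hp hw
  by_cases hf : ContinuousOn f (quasispectrum ℝ p)
  · by_cases hf0 : f 0 = 0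
    · rw [cfcₙ_apply f p, cfcₙ_apply f (w * p * star w) (hσ ▸ hf) hf0 (hp.conjugate w)]
      exact (DFunLike.congr_fun (cfcₙHomConjugate_eq_cfcₙHomSuperset hp hw)
        ⟨⟨_, hf.domRestrict⟩, hf0⟩).symm
    · simp [cfcₙ_apply_of_not_map_zero _ hf0]
  · rw [cfcₙ_apply_of_not_continuousOn _ hf, cfcₙ_apply_of_not_continuousOn _ (hσ ▸ hf)]
    simp

lemma cfc_conjugate (hp : IsSelfAdjoint p) (hw : star w * w * p = p) {f : ℝ → ℝ}
    (hf : ContinuousOn f (quasispectrum ℝ p)) (hf0 : f 0 = 0) :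
    cfc f (w * p * star w) = w * cfc f p * star w := by
  have hf' : ContinuousOn f (quasispectrum ℝ (w * p * star w)) :=
    (quasispectrum_conjugate_eq hp hw).symm ▸ hf
  rw [← cfcₙ_eq_cfc hf hf0, ← cfcₙ_eq_cfc hf' hf0, cfcₙ_conjugate hp hw]

end Conjugate

lemma CFC.sqrt_mul_star_self_eq_of_polar {A : Type*} [CStarAlgebra A] [PartialOrder A]
    [StarOrderedRing A] {a v : A} (ha : a = v * CFC.sqrt (star a * a))
    (hv : star v * v * CFC.sqrt (star a * a) = CFC.sqrt (star a * a)) :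
    CFC.sqrt (a * star a) = v * CFC.sqrt (star a * a) * star v := by
  set p := CFC.sqrt (star a * a)
  have hp : 0 ≤ p := CFC.sqrt_nonneg _
  refine CFC.sqrt_unique ?_ (star_right_conjugate_nonneg hp v)
  calc v * p * star v * (v * p * star v) = v * p * (star v * v * p) * star v := by noncomm_ring
    _ = v * p * star (v * p) := by rw [hv, star_mul, hp.isSelfAdjoint.star_eq]; noncomm_ring
    _ = a * star a := by rw [← ha]

lemma cfc_map_single {n A B : Type*} [Fintype n] [DecidableEq n] [CStarAlgebra A]
    [CStarAlgebra B] (Φ : Matrix n n A ≃⋆ₐ[ℂ] B) (i : n) {p : A} (hp : IsSelfAdjoint p)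
    {f : ℝ → ℝ} (hf : Continuous f) (hf0 : f 0 = 0) :
    cfc f (Φ (Matrix.single i i p)) = Φ (Matrix.single i i (cfc f p)) := by
  let ψ : A →⋆ₙₐ[ℂ] B := (Φ : Matrix n n A →⋆ₐ[ℂ] B).toNonUnitalStarAlgHom.comp
    (Matrix.singleNonUnitalStarAlgHom ℂ i)
  rw [← cfcₙ_eq_cfc hf.continuousOn hf0, ← cfcₙ_eq_cfc hf.continuousOn hf0]
  exact (ψ.map_cfcₙ f p hf.continuousOn hf0 (map_continuous ψ) hp (hp.map ψ)).symm

theorem stmt6_general {A B : Type*} [CStarAlgebra A] [PartialOrder A] [StarOrderedRing A]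
    [CStarAlgebra B]
    (Φ : Matrix (Fin 2) (Fin 2) A ≃⋆ₐ[ℂ] B) (a v : A)
    (ha : a = v * CFC.sqrt (star a * a))
    (hv : star v * v * CFC.sqrt (star a * a) = CFC.sqrt (star a * a))
    (f : ℝ → ℝ) (hf : Continuous f) (hf0 : f 0 = 0) :
    cfc f (Φ ((1 / 2 : ℂ) •
        !![CFC.sqrt (a * star a), a; star a, CFC.sqrt (star a * a)]))
      = Φ ((1 / 2 : ℂ) •
          !![cfc f (CFC.sqrt (a * star a)), cfc f (CFC.sqrt (a * star a)) * v;
             star v * cfc f (CFC.sqrt (a * star a)), cfc f (CFC.sqrt (star a * a))]) := by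
  have hsqrt := CFC.sqrt_mul_star_self_eq_of_polar ha hv
  set p := CFC.sqrt (star a * a)
  set q := cfc f p
  set c := Matrix.polarColumn v
  have hp : IsSelfAdjoint p := (CFC.sqrt_nonneg _).isSelfAdjoint
  have hq : cfcₙ f p = q := cfcₙ_eq_cfc hf.continuousOn hf0
  have hql : star v * v * q = q := hq ▸ mul_cfcₙ_eq_self hv f
  have hqr : q * (star v * v) = q := hq ▸ cfcₙ_mul_eq_self (.star_mul_self v) hv f
  have hX : (1 / 2 : ℂ) • !![CFC.sqrt (a * star a), a; star a, p] =
      c * Matrix.single 0 0 p * star c := by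
    rw [Matrix.polarColumn_mul_single_mul_star, hsqrt, ha, star_mul, hp.star_eq]
  have hc : star (Φ c) * Φ c * Φ (Matrix.single 0 0 p) = Φ (Matrix.single 0 0 p) := by
    rw [← map_star, ← map_mul, ← map_mul, Matrix.star_polarColumn_mul_self_mul_single hv]
  have hD : IsSelfAdjoint (Φ (Matrix.single 0 0 p)) :=
    (hp.map (Matrix.singleNonUnitalStarAlgHom ℂ 0)).map Φ
  have hqv : v * q * star v * v = v * q := by rw [mul_assoc, mul_assoc, hqr]
  have hvq : star v * (v * q * star v) = q * star v := by rw [← mul_assoc, ← mul_assoc, hql]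
  calc cfc f (Φ ((1 / 2 : ℂ) • !![CFC.sqrt (a * star a), a; star a, p]))
      = Φ c * cfc f (Φ (Matrix.single 0 0 p)) * star (Φ c) := by
        rw [hX, map_mul, map_mul, map_star, cfc_conjugate hD hc hf.continuousOn hf0]
    _ = Φ (c * Matrix.single 0 0 q * star c) := by
        rw [cfc_map_single Φ 0 hp hf hf0, map_mul, map_mul, map_star]
    _ = _ := by
        rw [Matrix.polarColumn_mul_single_mul_star, hsqrt,
          cfc_conjugate hp hv hf.continuousOn hf0, hqv, hvq]

/-- Let `A` be a unital C*-algebra and let `a, v ∈ A` satisfy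
`a = v·|a|` and `v* v·|a| = |a|` (polar decomposition). Then for every continuous
`f : ℝ → ℝ` with `f 0 = 0`, applying `f` via the continuous functional calculus to the
positive element `(1/2)·[[|a*|, a], [a*, |a|]]` of the C*-algebra `M₂(A)` yields
`f((1/2)·[[|a*|, a], [a*, |a|]]) = (1/2)·[[f(|a*|), f(|a*|) v], [v* f(|a*|), f(|a|)]]`.

Since Mathlib does not endow `Matrix (Fin 2) (Fin 2) A` with its (unique) C*-algebra
structure, we realize the C*-algebra `M₂(A)` as an arbitrary C*-algebra `B` that is
⋆-isomorphic to `Matrix (Fin 2) (Fin 2) A`, and apply the functional calculus there. -/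
theorem stmt6 {A B : Type*} [CStarAlgebra A] [PartialOrder A] [StarOrderedRing A]
    [CStarAlgebra B] [PartialOrder B] [StarOrderedRing B]
    (Φ : Matrix (Fin 2) (Fin 2) A ≃⋆ₐ[ℂ] B) (a v : A)
    (ha : a = v * CFC.sqrt (star a * a))
    (hv : star v * v * CFC.sqrt (star a * a) = CFC.sqrt (star a * a))
    (f : ℝ → ℝ) (hf : Continuous f) (hf0 : f 0 = 0) :
    cfc f (Φ ((1 / 2 : ℂ) •
        !![CFC.sqrt (a * star a), a; star a, CFC.sqrt (star a * a)]))
      = Φ ((1 / 2 : ℂ) •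
          !![cfc f (CFC.sqrt (a * star a)), cfc f (CFC.sqrt (a * star a)) * v;
             star v * cfc f (CFC.sqrt (a * star a)), cfc f (CFC.sqrt (star a * a))]) :=
  stmt6_general Φ a v ha hv f hf hf0
end

section
/- Let n ∈ ℕ, let a be an n×n complex matrix, and let p ≥ 1 be a real number. Let M be the 2n×2n positive semidefinite block matrix fromBlocks(|a*|, a, aᴴ, |a|), where |a| = √(aᴴ a) and |a*| = √(a aᴴ). Then trace(f(M)) = 2^p · trace(f(|a|)), where f(t) = t^p (real power) is applied to the Hermitian matrices M and |a| via continuous functional calculus (equivalently, via the spectral decomposition). In particular (trace(f(M)))^{1/p} = 2 · (trace(f(|a|)))^{1/p}, i.e. the Schatten p-norm of M equals twice the Schatten p-norm of a. -/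
/-! The Hermitian dilation `N = fromBlocks 0 a aᴴ 0` satisfies
`N ^ 2 = fromBlocks (a * aᴴ) 0 0 (aᴴ * a)`, so `|N| = fromBlocks |a*| 0 0 |a|` and `M = |N| + N`;
hence `M ^ p = h N` with `h x = (|x| + x) ^ p`. Conjugation by the unitary `fromBlocks 1 0 0 (-1)`
turns `N` into `-N`, so `tr (h N) = tr (h (-N))`, and `h x + h (-x) = 2 ^ p * |x| ^ p` gives
`2 tr (M ^ p) = 2 ^ p tr (|N| ^ p) = 2 ^ p (tr (|a*| ^ p) + tr (|a| ^ p))`. Finally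
`tr (|a*| ^ p) = tr (|a| ^ p)`: on the finite spectra of `a * aᴴ` and `aᴴ * a` the functional
calculus is given by one interpolating polynomial `q` with `q 0 = 0`, and
`tr ((x * y) ^ (i + 1)) = tr ((y * x) ^ (i + 1))`. -/

open Matrix Polynomial
open scoped ComplexOrder

theorem Set.Finite.exists_polynomial_eval_eq {F : Type*} [Field F] {S : Set F} (hS : S.Finite)
    (f : F → F) : ∃ q : F[X], ∀ x ∈ S, q.eval x = f x := by
  classical
  refine ⟨Lagrange.interpolate hS.toFinset id f, fun x hx => ?_⟩
  simpa using Lagrange.eval_interpolate_at_node (r := f) (Set.injOn_id _) (hS.mem_toFinset.mpr hx)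

theorem Real.abs_add_self_rpow_add_abs_sub_self_rpow {p : ℝ} (hp : p ≠ 0) (x : ℝ) :
    (|x| + x) ^ p + (|x| - x) ^ p = 2 ^ p * |x| ^ p := by
  rcases le_total 0 x with hx | hx
  · rw [abs_of_nonneg hx, sub_self, Real.zero_rpow hp, add_zero, ← two_mul,
      Real.mul_rpow zero_le_two hx]
  · rw [abs_of_nonpos hx, neg_add_cancel, Real.zero_rpow hp, zero_add, sub_eq_add_neg, ← two_mul,
      Real.mul_rpow zero_le_two (neg_nonneg.2 hx)]

section CFC

variable {R A : Type*} {p : A → Prop} [CommSemiring R] [StarRing R] [MetricSpace R]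
  [IsTopologicalSemiring R] [ContinuousStar R] [TopologicalSpace A] [Ring A] [StarRing A]
  [Algebra R A] [ContinuousFunctionalCalculus R A p]

theorem cfc_eq_aeval_of_eqOn {a : A} (ha : p a) {f : R → R} {q : R[X]}
    (hq : ∀ x ∈ spectrum R a, q.eval x = f x) : cfc f a = aeval a q := by
  rw [← cfc_polynomial q a ha]
  exact cfc_congr fun x hx => (hq x hx).symm

end CFC

namespace Matrix

variable {m k l R α : Type*}

theorem trace_fromBlocks [Fintype k] [Fintype l] [AddCommMonoid α] (A : Matrix k k α)
    (B : Matrix k l α) (C : Matrix l k α) (D : Matrix l l α) :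
    (fromBlocks A B C D).trace = A.trace + D.trace := by
  simp [trace, Fintype.sum_sum_type]

theorem isSelfAdjoint_fromBlocks_zero_conjTranspose (a : Matrix k l ℂ) :
    IsSelfAdjoint (fromBlocks 0 a aᴴ 0) :=
  IsHermitian.fromBlocks (by simp) rfl (by simp)

variable [Fintype m] [DecidableEq m] [Fintype k] [DecidableEq k] [Fintype l] [DecidableEq l]

theorem fromBlocks_zero_zero_sq [Semiring α] (B : Matrix k l α) (C : Matrix l k α) :
    fromBlocks 0 B C 0 ^ 2 = fromBlocks (B * C) 0 0 (C * B) := by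
  simp [sq, fromBlocks_multiply]

theorem aeval_fromBlocks_zero_zero [CommSemiring R] [Semiring α] [Algebra R α]
    (X : Matrix k k α) (Y : Matrix l l α) (q : R[X]) :
    aeval (fromBlocks X 0 0 Y) q = fromBlocks (aeval X q) 0 0 (aeval Y q) := by
  induction q using Polynomial.induction_on' with
  | add q₁ q₂ h₁ h₂ => simp only [map_add, h₁, h₂, fromBlocks_add, add_zero]
  | monomial i r =>
    simp only [aeval_monomial, ← Algebra.smul_def, fromBlocks_diagonal_pow, fromBlocks_smul,
      smul_zero]

theorem trace_pow_succ_mul_comm [CommSemiring α] (x y : Matrix m m α) (i : ℕ) :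
    ((x * y) ^ (i + 1)).trace = ((y * x) ^ (i + 1)).trace := by
  rw [pow_succ, ← mul_assoc, mul_pow_mul, trace_mul_comm, ← mul_assoc, ← pow_succ']

theorem trace_aeval_mul_comm [CommSemiring R] [CommSemiring α] [Algebra R α]
    (x y : Matrix m m α) {q : R[X]} (hq : q.coeff 0 = 0) :
    (aeval (x * y) q).trace = (aeval (y * x) q).trace := by
  simp only [aeval_eq_sum_range, trace_sum, trace_smul]
  refine Finset.sum_congr rfl fun i _ => ?_
  cases i with
  | zero => simp [hq]
  | succ i => rw [trace_pow_succ_mul_comm]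

theorem cfc_fromBlocks_zero_zero {X : Matrix k k ℂ} {Y : Matrix l l ℂ} (hX : IsSelfAdjoint X)
    (hY : IsSelfAdjoint Y) (f : ℝ → ℝ) :
    cfc f (fromBlocks X 0 0 Y) = fromBlocks (cfc f X) 0 0 (cfc f Y) := by
  have hXY : IsSelfAdjoint (fromBlocks X 0 0 Y) := IsHermitian.fromBlocks hX (by simp) hY
  obtain ⟨q, hq⟩ : ∃ q : ℝ[X], ∀ x ∈ spectrum ℝ (fromBlocks X 0 0 Y) ∪ spectrum ℝ X ∪
      spectrum ℝ Y, q.eval x = f x :=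
    ((finite_real_spectrum.union finite_real_spectrum).union
      finite_real_spectrum).exists_polynomial_eval_eq f
  rw [cfc_eq_aeval_of_eqOn hXY fun x hx => hq x (.inl (.inl hx)), aeval_fromBlocks_zero_zero,
    cfc_eq_aeval_of_eqOn hX fun x hx => hq x (.inl (.inr hx)),
    cfc_eq_aeval_of_eqOn hY fun x hx => hq x (.inr hx)]

theorem trace_cfc_mul_comm {x y : Matrix m m ℂ} (hxy : IsSelfAdjoint (x * y))
    (hyx : IsSelfAdjoint (y * x)) {f : ℝ → ℝ} (hf : f 0 = 0) :
    (cfc f (x * y)).trace = (cfc f (y * x)).trace := by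
  obtain ⟨q, hq⟩ : ∃ q : ℝ[X], ∀ t ∈ spectrum ℝ (x * y) ∪ spectrum ℝ (y * x) ∪ {0},
      q.eval t = f t :=
    ((finite_real_spectrum.union finite_real_spectrum).union
      (Set.finite_singleton 0)).exists_polynomial_eval_eq f
  rw [cfc_eq_aeval_of_eqOn hxy fun t ht => hq t (.inl (.inl ht)),
    cfc_eq_aeval_of_eqOn hyx fun t ht => hq t (.inl (.inr ht))]
  have hq0 : q.coeff 0 = 0 := by rw [coeff_zero_eq_eval_zero, hq 0 (.inr rfl), hf]
  exact trace_aeval_mul_comm x y hq0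

theorem trace_cfc_unitary_conj (U : unitary (Matrix m m ℂ)) {A : Matrix m m ℂ}
    (hA : IsSelfAdjoint A) (f : ℝ → ℝ) :
    (cfc f (U * A * star (U : Matrix m m ℂ))).trace = (cfc f A).trace := by
  have h := StarAlgHomClass.map_cfc (S := ℂ) (Unitary.conjStarAlgAut ℂ (Matrix m m ℂ) U)
    f A (finite_real_spectrum.continuousOn _)
    (((continuous_const.mul continuous_id).mul continuous_const).congr
      fun X => (Unitary.conjStarAlgAut_apply U X).symm) hA (hA.conjugate _)
  simp only [Unitary.conjStarAlgAut_apply] at h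
  rw [← h, trace_mul_cycle, Unitary.coe_star_mul_self, one_mul]

open scoped MatrixOrder in
theorem re_trace_cfc_nonneg {A : Matrix m m ℂ} {f : ℝ → ℝ}
    (hf : ∀ x ∈ spectrum ℝ A, 0 ≤ f x) : 0 ≤ (cfc f A).trace.re :=
  (Complex.nonneg_iff.mp (cfc_nonneg hf).posSemidef.trace_nonneg).1

theorem cfc_abs_fromBlocks_zero_conjTranspose (a : Matrix k l ℂ) :
    cfc (fun x : ℝ => |x|) (fromBlocks 0 a aᴴ 0) =
      fromBlocks (cfc Real.sqrt (a * aᴴ)) 0 0 (cfc Real.sqrt (aᴴ * a)) := by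
  calc cfc (fun x : ℝ => |x|) (fromBlocks 0 a aᴴ 0)
      = cfc (fun x => Real.sqrt (x ^ 2)) (fromBlocks 0 a aᴴ 0) :=
        cfc_congr fun x _ => (Real.sqrt_sq_eq_abs x).symm
    _ = cfc Real.sqrt (fromBlocks 0 a aᴴ 0 ^ 2) :=
        cfc_comp_pow _ 2 _ ((finite_real_spectrum.image _).continuousOn _)
          (isSelfAdjoint_fromBlocks_zero_conjTranspose a)
    _ = _ := by
        rw [fromBlocks_zero_zero_sq, cfc_fromBlocks_zero_zero
          (posSemidef_self_mul_conjTranspose a).1 (posSemidef_conjTranspose_mul_self a).1]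

theorem trace_cfc_comp_neg_fromBlocks_zero_conjTranspose (a : Matrix k l ℂ) (f : ℝ → ℝ) :
    (cfc (fun x => f (-x)) (fromBlocks 0 a aᴴ 0)).trace =
      (cfc f (fromBlocks 0 a aᴴ 0)).trace := by
  have hN := isSelfAdjoint_fromBlocks_zero_conjTranspose a
  let J : unitary (Matrix (k ⊕ l) (k ⊕ l) ℂ) :=
    ⟨fromBlocks 1 0 0 (-1), by
      simp [Unitary.mem_iff, star_eq_conjTranspose, fromBlocks_conjTranspose, fromBlocks_multiply]⟩
  have hJ : (J : Matrix (k ⊕ l) (k ⊕ l) ℂ) * fromBlocks 0 a aᴴ 0 * star (J : Matrix _ _ ℂ) =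
      -fromBlocks 0 a aᴴ 0 := by
    simp [J, star_eq_conjTranspose, fromBlocks_conjTranspose, fromBlocks_multiply, fromBlocks_neg]
  rw [cfc_comp_neg f _ ((finite_real_spectrum.image _).continuousOn _) hN, ← hJ,
    trace_cfc_unitary_conj J hN]

theorem trace_cfc_cfc_sqrt_mul_conjTranspose (a : Matrix m m ℂ) {f : ℝ → ℝ} (hf : f 0 = 0) :
    (cfc f (cfc Real.sqrt (a * aᴴ))).trace = (cfc f (cfc Real.sqrt (aᴴ * a))).trace := by
  have h₁ : IsSelfAdjoint (a * aᴴ) := (posSemidef_self_mul_conjTranspose a).1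
  have h₂ : IsSelfAdjoint (aᴴ * a) := (posSemidef_conjTranspose_mul_self a).1
  rw [← cfc_comp' f Real.sqrt (a * aᴴ) ((finite_real_spectrum.image _).continuousOn _)
      (finite_real_spectrum.continuousOn _) h₁,
    ← cfc_comp' f Real.sqrt (aᴴ * a) ((finite_real_spectrum.image _).continuousOn _)
      (finite_real_spectrum.continuousOn _) h₂]
  exact trace_cfc_mul_comm h₁ h₂ (by rw [Real.sqrt_zero, hf])

theorem trace_cfc_rpow_fromBlocks_abs (a : Matrix m m ℂ) {p : ℝ} (hp : p ≠ 0) :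
    (cfc (fun t : ℝ => t ^ p)
        (fromBlocks (cfc Real.sqrt (a * aᴴ)) a aᴴ (cfc Real.sqrt (aᴴ * a)))).trace =
      ((2 ^ p : ℝ) : ℂ) * (cfc (fun t : ℝ => t ^ p) (cfc Real.sqrt (aᴴ * a))).trace := by
  set N := fromBlocks 0 a aᴴ 0
  have hN : IsSelfAdjoint N := isSelfAdjoint_fromBlocks_zero_conjTranspose a
  set h : ℝ → ℝ := fun x => (|x| + x) ^ p
  have hM : fromBlocks (cfc Real.sqrt (a * aᴴ)) a aᴴ (cfc Real.sqrt (aᴴ * a)) =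
      cfc (fun x : ℝ => |x| + x) N := by
    rw [cfc_add _ _ _ (finite_real_spectrum.continuousOn _) (finite_real_spectrum.continuousOn _),
      cfc_id' ℝ N hN, cfc_abs_fromBlocks_zero_conjTranspose, fromBlocks_add]
    simp
  have hMh : cfc (fun t : ℝ => t ^ p) (cfc (fun x : ℝ => |x| + x) N) = cfc h N :=
    (cfc_comp' _ _ _ ((finite_real_spectrum.image _).continuousOn _)
      (finite_real_spectrum.continuousOn _) hN).symm
  have hsum : (cfc h N).trace + (cfc (fun x => h (-x)) N).trace =
      ((2 ^ p : ℝ) : ℂ) * (cfc (fun t : ℝ => t ^ p) (cfc (fun x : ℝ => |x|) N)).trace := by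
    rw [← trace_add, ← cfc_add _ _ _ (finite_real_spectrum.continuousOn _)
        (finite_real_spectrum.continuousOn _),
      ← cfc_comp' _ _ _ ((finite_real_spectrum.image _).continuousOn _)
        (finite_real_spectrum.continuousOn _) hN,
      ← Complex.real_smul, ← trace_smul,
      ← cfc_const_mul _ _ _ (finite_real_spectrum.continuousOn _)]
    congr 2
    funext x
    change (|x| + x) ^ p + (|-x| + -x) ^ p = _
    rw [abs_neg, ← sub_eq_add_neg, Real.abs_add_self_rpow_add_abs_sub_self_rpow hp]
  rw [hM, hMh]
  refine mul_left_cancel₀ (two_ne_zero' ℂ) ?_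
  calc 2 * (cfc h N).trace = (cfc h N).trace + (cfc (fun x => h (-x)) N).trace := by
        rw [trace_cfc_comp_neg_fromBlocks_zero_conjTranspose, two_mul]
    _ = _ := by
        rw [hsum, cfc_abs_fromBlocks_zero_conjTranspose,
          cfc_fromBlocks_zero_zero (cfc_predicate _ _) (cfc_predicate _ _), trace_fromBlocks,
          trace_cfc_cfc_sqrt_mul_conjTranspose a (f := (· ^ p)) (Real.zero_rpow hp)]
        ring

end Matrix

open Matrix ComplexOrder in
/-- Let `a` be an `n × n` complex matrix and `p ≥ 1` a real number.
Let `M` be the `2n × 2n` (positive semidefinite) block matrix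
`fromBlocks |a*| a aᴴ |a|`, where `|a| = √(aᴴ a)` and `|a*| = √(a aᴴ)`. Then, with
`f t = t ^ p` applied to the Hermitian matrices `M` and `|a|` by the continuous
functional calculus, `trace (f M) = 2^p · trace (f |a|)`; in particular
`(trace (f M))^(1/p) = 2 · (trace (f |a|))^(1/p)`, i.e. the Schatten `p`-norm of `M`
is twice the Schatten `p`-norm of `a`. -/
theorem stmt9 (n : ℕ) (a : Matrix (Fin n) (Fin n) ℂ) (p : ℝ) (hp : 1 ≤ p) :
    (cfc (fun t : ℝ => t ^ p)
        (fromBlocks (cfc Real.sqrt (a * aᴴ)) a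
          aᴴ (cfc Real.sqrt (aᴴ * a)))).trace
      = (((2 : ℝ) ^ p : ℝ) : ℂ) *
          (cfc (fun t : ℝ => t ^ p) (cfc Real.sqrt (aᴴ * a))).trace ∧
    (cfc (fun t : ℝ => t ^ p)
        (fromBlocks (cfc Real.sqrt (a * aᴴ)) a
          aᴴ (cfc Real.sqrt (aᴴ * a)))).trace.re ^ (1 / p)
      = 2 * (cfc (fun t : ℝ => t ^ p)
            (cfc Real.sqrt (aᴴ * a))).trace.re ^ (1 / p) := by
  have hp0 : p ≠ 0 := (zero_lt_one.trans_le hp).ne'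
  have htrace := trace_cfc_rpow_fromBlocks_abs a hp0
  have hnonneg : 0 ≤ (cfc (fun t : ℝ => t ^ p) (cfc Real.sqrt (aᴴ * a))).trace.re := by
    have ha : IsSelfAdjoint (aᴴ * a) := (posSemidef_conjTranspose_mul_self a).1
    refine re_trace_cfc_nonneg fun x hx => ?_
    rw [cfc_map_spectrum Real.sqrt (aᴴ * a) ha] at hx
    obtain ⟨y, -, rfl⟩ := hx
    exact Real.rpow_nonneg (Real.sqrt_nonneg y) p
  refine ⟨htrace, ?_⟩
  rw [htrace, Complex.re_ofReal_mul, Real.mul_rpow (by positivity) hnonneg,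
    ← Real.rpow_mul zero_le_two, mul_one_div_cancel hp0, Real.rpow_one]
end

section
/- Let A be a unital C*-algebra, let a, v ∈ A satisfy a = v · |a| and v* v · |a| = |a|, and let e ∈ A be a projection (e = e* = e²) commuting with a* a. Then a e v* is a positive element of A and a e v* = √(a e a*); in other words, a e v* = |(a e)*|. -/
/-! Write `s = |a|`. Since `e` commutes with `a* a` it commutes with `s`, so `s e ≥ 0` and
`a e v* = v (s e) v* ≥ 0`. Its square is `a e (v* v s) e v* = a e s v* = a e a*`, so uniqueness
of positive square roots gives `a e v* = √(a e a*)`. -/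

section StarRing

variable {R : Type*} [Semiring R] [StarRing R]

lemma mul_mul_star_mul_self_of_polar {a v s e : R} (ha : a = v * s)
    (hv : star v * v * s = s) (hs : IsSelfAdjoint s) (he : IsIdempotentElem e)
    (hes : Commute e s) :
    a * e * star v * (a * e * star v) = a * e * star a := by
  calc a * e * star v * (a * e * star v)
      = a * e * (star v * v * s * e) * star v := by rw [ha]; noncomm_ring
    _ = a * (e * e) * s * star v := by rw [hv, ← hes.eq]; noncomm_ring
    _ = a * e * star a := by rw [he.eq, ha, star_mul, hs.star_eq]; noncomm_ring

end StarRing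

section CStarAlgebra

variable {A : Type*} [CStarAlgebra A] [PartialOrder A] [StarOrderedRing A]

lemma Commute.cfcSqrt_right {a b : A} (h : Commute b a) : Commute b (CFC.sqrt a) := by
  rw [CFC.sqrt_eq_cfc]
  exact (h.symm.cfc_nnreal _).symm

lemma mul_mul_star_nonneg_of_polar {a v s e : A} (ha : a = v * s) (hs : 0 ≤ s)
    (he : IsStarProjection e) (hes : Commute e s) :
    0 ≤ a * e * star v := by
  have hse : 0 ≤ s * e := hes.symm.mul_nonneg hs he.nonneg
  simpa only [ha, mul_assoc] using star_right_conjugate_nonneg hse v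

end CStarAlgebra

/-- Let `A` be a unital C*-algebra, let `a, v ∈ A` satisfy
`a = v·|a|` and `v* v·|a| = |a|` (polar decomposition), and let `e ∈ A` be a projection
(`e = e*`, `e = e²`) commuting with `a* a`. Then `a e v*` is a positive element of `A`
and `a e v* = √(a e a*)`, i.e. `a e v* = |(a e)*|`. -/
theorem stmt12 {A : Type*} [CStarAlgebra A] [PartialOrder A] [StarOrderedRing A]
    (a v e : A) (ha : a = v * CFC.sqrt (star a * a))
    (hv : star v * v * CFC.sqrt (star a * a) = CFC.sqrt (star a * a))
    (he : IsSelfAdjoint e) (he2 : IsIdempotentElem e)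
    (hcomm : Commute e (star a * a)) :
    0 ≤ a * e * star v ∧ a * e * star v = CFC.sqrt (a * e * star a) := by
  have hes : Commute e (CFC.sqrt (star a * a)) := hcomm.cfcSqrt_right
  have hpos : 0 ≤ a * e * star v :=
    mul_mul_star_nonneg_of_polar ha (CFC.sqrt_nonneg _) ⟨he2, he⟩ hes
  have hsq : a * e * star v * (a * e * star v) = a * e * star a :=
    mul_mul_star_mul_self_of_polar ha hv (CFC.sqrt_nonneg _).isSelfAdjoint he2 hes
  exact ⟨hpos, (CFC.sqrt_unique hsq hpos).symm⟩
end
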